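/- If λ is an eigenvalue of the non-backtracking matrix of a finite graph and |λ| = 1, then λ is a root of unity. -/

import Mathlib

/-!
Let `v` be an eigenvector for `λ`, with `|λ| = 1` and `λ² ≠ 1`, and let `f x` be the total weight
of `v` on the darts entering `x`. The eigen-equation gives `(1 - λ²) v(u → x) = f x - λ f u`
and, for the adjacency operator `A`, `λ (A f) x = (deg x - 1 + λ²) f x`. Pairing the latter with
`f`, the number `⟨f, A f⟩` is real, which forces the sum of nonnegative terms
`∑ (deg x - 2) |f x|²` to vanish: `f` lives on vertices of degree two. Hence every dart `d`
has a successor `e` with `λ² v(e)² = v(d)²`: the reversal of `d` if `f` vanishes at its head, and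
otherwise the continuation of `d` through its head (of degree two), with `λ v(e) = v(d)`.
Iterating the successor map on the finite set of darts closes a cycle, along which `λ^{2q} = 1`.
-/

open SimpleGraph Matrix

/-- The non-backtracking matrix of a simple graph, indexed by oriented edges (darts). -/
def nbMatrix {V : Type} [Fintype V] [DecidableEq V] (G : SimpleGraph V) [DecidableRel G.Adj] :
    Matrix G.Dart G.Dart ℂ :=
  fun d e => if e.toProd.2 = d.toProd.1 ∧ e.toProd.1 ≠ d.toProd.2 then 1 else 0

open Finset ComplexConjugate

theorem exists_pow_eq_one_of_forall_exists_mul_eq {α M : Type*} [Finite α]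
    [MonoidWithZero M] [IsCancelMulZero M] {μ : M} {φ : α → M} (h : ∀ a, ∃ b, μ * φ b = φ a)
    {a₀ : α} (ha₀ : φ a₀ ≠ 0) : ∃ q, 0 < q ∧ μ ^ q = 1 := by
  choose T hT using h
  have hiter : ∀ n a, μ ^ n * φ (T^[n] a) = φ a := by
    intro n a
    induction n with
    | zero => simp
    | succ n ih => rw [Function.iterate_succ_apply', pow_succ, mul_assoc, hT, ih]
  obtain ⟨i, j, hij, hTij⟩ := Set.finite_univ.exists_lt_map_eq_of_forall_mem
    (f := fun n => T^[n] a₀) (fun _ => Set.mem_univ _)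
  have hi : μ ^ i * φ (T^[i] a₀) ≠ 0 := by rwa [hiter]
  refine ⟨j - i, Nat.sub_pos_of_lt hij, mul_right_cancel₀ (right_ne_zero_of_mul hi) ?_⟩
  refine mul_left_cancel₀ (left_ne_zero_of_mul hi) ?_
  rw [one_mul, ← mul_assoc, ← pow_add, Nat.add_sub_cancel' hij.le, hiter i, hTij, hiter]

theorem Complex.eq_of_mul_eq_add_sq_mul {lam a : ℂ} {b c : ℝ} (hlam : ‖lam‖ = 1)
    (hsq : lam ^ 2 ≠ 1) (ha : conj a = a) (h : lam * a = b + lam ^ 2 * c) : b = c := by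
  have hconj : conj lam * lam = 1 := by
    rw [mul_comm, Complex.mul_conj, Complex.normSq_eq_norm_sq, hlam]; norm_num
  have h' : conj lam * a = b + conj lam ^ 2 * c := by
    simpa [ha] using congrArg conj h
  have : ((b : ℂ) - c) * (1 - lam ^ 2) = 0 := by
    linear_combination lam ^ 2 * h' - h + (c * (conj lam * lam + 1) - lam * a) * hconj
  exact_mod_cast sub_eq_zero.mp ((mul_eq_zero.mp this).resolve_right (sub_ne_zero.mpr hsq.symm))

namespace SimpleGraph

variable {V : Type} [Fintype V] {G : SimpleGraph V} [DecidableRel G.Adj]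

theorem conj_sum_dart_conj_snd_mul_fst (f : V → ℂ) :
    conj (∑ d : G.Dart, conj (f d.snd) * f d.fst) = ∑ d : G.Dart, conj (f d.snd) * f d.fst := by
  rw [map_sum]
  exact Fintype.sum_equiv Dart.symm_involutive.toPerm _ _ fun d => by simp [mul_comm]

variable [DecidableEq V]

theorem dart_snd_fiber_card_eq_degree (x : V) : #{d : G.Dart | d.snd = x} = G.degree x := by
  rw [← G.dart_fst_fiber_card_eq_degree x]
  exact card_nbij' Dart.symm Dart.symm (fun d => by simp) (fun d => by simp) (fun d _ => by simp)
    (fun d _ => by simp)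

def dartInflow (v : G.Dart → ℂ) (x : V) : ℂ := ∑ e : G.Dart with e.snd = x, v e

theorem nbMatrix_mulVec_apply (v : G.Dart → ℂ) (d : G.Dart) :
    (nbMatrix G *ᵥ v) d = dartInflow v d.fst - v d.symm := by
  have hfilter : ({e : G.Dart | e.snd = d.fst} : Finset G.Dart).erase d.symm =
      ({e : G.Dart | e.snd = d.fst ∧ e.fst ≠ d.snd} : Finset G.Dart) := by
    ext e
    simp only [mem_erase, mem_filter, mem_univ, true_and, ne_eq, Dart.ext_iff,
      Dart.symm_toProd, Prod.ext_iff, Prod.fst_swap, Prod.snd_swap]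
    tauto
  rw [dartInflow, ← add_sum_erase _ _ (a := d.symm) (by simp), hfilter, sum_filter,
    add_sub_cancel_left]
  simp [mulVec, dotProduct, nbMatrix]

variable {v : G.Dart → ℂ} {lam : ℂ}

theorem one_sub_sq_mul_apply_eq_dartInflow_sub (hv : nbMatrix G *ᵥ v = lam • v) (d : G.Dart) :
    (1 - lam ^ 2) * v d = dartInflow v d.snd - lam * dartInflow v d.fst := by
  have hd := congrFun hv d
  have hds := congrFun hv d.symm
  simp only [nbMatrix_mulVec_apply, Pi.smul_apply, smul_eq_mul, Dart.symm_symm,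
    Dart.symm_toProd, Prod.fst_swap] at hd hds
  linear_combination lam * hd - hds

theorem mul_sum_dartInflow_fst_eq (hv : nbMatrix G *ᵥ v = lam • v) (x : V) :
    lam * ∑ e : G.Dart with e.snd = x, dartInflow v e.fst =
      ((G.degree x : ℂ) - 1 + lam ^ 2) * dartInflow v x := by
  have hsum : (1 - lam ^ 2) * dartInflow v x =
      ∑ e : G.Dart with e.snd = x, (dartInflow v x - lam * dartInflow v e.fst) := by
    rw [dartInflow, mul_sum]
    refine sum_congr rfl fun e he => ?_
    rw [← (mem_filter.mp he).2]
    exact one_sub_sq_mul_apply_eq_dartInflow_sub hv e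
  rw [sum_sub_distrib, sum_const, dart_snd_fiber_card_eq_degree, nsmul_eq_mul, ← mul_sum] at hsum
  linear_combination hsum

theorem degree_eq_two_of_dartInflow_ne_zero (hmin : ∀ x, 2 ≤ G.degree x) (hlam : ‖lam‖ = 1)
    (hsq : lam ^ 2 ≠ 1) (hv : nbMatrix G *ᵥ v = lam • v) {x : V} (hx : dartInflow v x ≠ 0) :
    G.degree x = 2 := by
  set f := dartInflow v
  have hform : lam * ∑ d : G.Dart, conj (f d.snd) * f d.fst =
      ((∑ y, ((G.degree y : ℝ) - 1) * Complex.normSq (f y) : ℝ) : ℂ) +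
        lam ^ 2 * ((∑ y, Complex.normSq (f y) : ℝ) : ℂ) := by
    push_cast
    rw [← sum_fiberwise univ fun d : G.Dart => d.snd, mul_sum, mul_sum, ← sum_add_distrib]
    refine sum_congr rfl fun y _ => ?_
    have hfactor : ∑ d : G.Dart with d.snd = y, conj (f d.snd) * f d.fst =
        conj (f y) * ∑ d : G.Dart with d.snd = y, f d.fst := by
      rw [mul_sum]
      exact sum_congr rfl fun d hd => by rw [(mem_filter.mp hd).2]
    rw [hfactor, mul_left_comm, mul_sum_dartInflow_fst_eq hv, Complex.normSq_eq_conj_mul_self]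
    ring
  have hbalance := Complex.eq_of_mul_eq_add_sq_mul hlam hsq (conj_sum_dart_conj_snd_mul_fst f) hform
  have hzero : ∑ y, ((G.degree y : ℝ) - 2) * Complex.normSq (f y) = 0 := by
    simp only [sub_mul, sum_sub_distrib, one_mul, ← mul_sum] at hbalance ⊢
    linarith
  have hterm := (sum_eq_zero_iff_of_nonneg fun y _ => mul_nonneg
    (sub_nonneg.mpr (by exact_mod_cast hmin y)) (Complex.normSq_nonneg (f y))).mp hzero x
    (mem_univ x)
  rcases mul_eq_zero.mp hterm with hdeg | hfx
  · exact_mod_cast sub_eq_zero.mp hdeg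
  · exact absurd (Complex.normSq_eq_zero.mp hfx) hx

theorem mul_apply_symm_eq_neg_of_dartInflow_snd_eq_zero (hsq : lam ^ 2 ≠ 1)
    (hv : nbMatrix G *ᵥ v = lam • v) {d : G.Dart} (hd : dartInflow v d.snd = 0) :
    lam * v d.symm = -v d := by
  have h := one_sub_sq_mul_apply_eq_dartInflow_sub hv d
  have hs := one_sub_sq_mul_apply_eq_dartInflow_sub hv d.symm
  simp only [Dart.symm_toProd, Prod.fst_swap, Prod.snd_swap, hd] at h hs
  have : (1 - lam ^ 2) * (lam * v d.symm + v d) = 0 := by linear_combination lam * hs + h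
  exact eq_neg_of_add_eq_zero_left ((mul_eq_zero.mp this).resolve_left (sub_ne_zero.mpr hsq.symm))

theorem exists_mul_apply_eq_of_degree_snd_eq_two (hv : nbMatrix G *ᵥ v = lam • v) {d : G.Dart}
    (hd : G.degree d.snd = 2) : ∃ e : G.Dart, lam * v e = v d := by
  set s : Finset G.Dart := {e | e.snd = d.snd}
  have hds : d ∈ s := by simp [s]
  obtain ⟨d', hd'⟩ : ∃ d', s.erase d = {d'} := card_eq_one.mp <| by
    rw [card_erase_of_mem hds, dart_snd_fiber_card_eq_degree, hd]
  have hd's : d'.snd = d.snd := by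
    simpa [s] using mem_of_mem_erase (hd' ▸ mem_singleton_self d' : d' ∈ s.erase d)
  refine ⟨d'.symm, ?_⟩
  have hinflow : dartInflow v d.snd = v d + v d' := by
    rw [dartInflow, ← add_sum_erase _ _ hds, hd', sum_singleton]
  have h := congrFun hv d'.symm
  rw [nbMatrix_mulVec_apply, Dart.symm_symm, Pi.smul_apply, smul_eq_mul] at h
  simp only [Dart.symm_toProd, Prod.fst_swap, hd's, hinflow] at h
  linear_combination -h

end SimpleGraph

theorem unitary_eigenvalue_is_root_of_unity_general {V : Type} [Fintype V] [DecidableEq V]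
    (G : SimpleGraph V) [DecidableRel G.Adj]
    (hmin : ∀ x : V, 2 ≤ G.degree x)
    (lam : ℂ) (hlam : ‖lam‖ = 1)
    (hev : ∃ v : G.Dart → ℂ, v ≠ 0 ∧ (nbMatrix G).mulVec v = lam • v) :
    ∃ q : ℕ, 0 < q ∧ lam ^ q = 1 := by
  obtain ⟨v, hv0, hv⟩ := hev
  by_cases hsq : lam ^ 2 = 1
  · exact ⟨2, two_pos, hsq⟩
  obtain ⟨d₀, hd₀⟩ := Function.ne_iff.mp hv0
  have hstep : ∀ d : G.Dart, ∃ e, lam ^ 2 * v e ^ 2 = v d ^ 2 := by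
    intro d
    by_cases hd : dartInflow v d.snd = 0
    · refine ⟨d.symm, ?_⟩
      rw [← neg_sq (v d), ← mul_apply_symm_eq_neg_of_dartInflow_snd_eq_zero hsq hv hd]
      ring
    · obtain ⟨e, he⟩ := exists_mul_apply_eq_of_degree_snd_eq_two hv
        (degree_eq_two_of_dartInflow_ne_zero hmin hlam hsq hv hd)
      exact ⟨e, by rw [← he]; ring⟩
  obtain ⟨q, hq, hpow⟩ := exists_pow_eq_one_of_forall_exists_mul_eq hstep (pow_ne_zero 2 hd₀)
  exact ⟨2 * q, by omega, by rw [pow_mul, hpow]⟩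

/-- Any unitary eigenvalue of the non-backtracking matrix of a finite (connected, minimum
degree ≥ 2) graph is a root of unity. -/
theorem unitary_eigenvalue_is_root_of_unity {V : Type} [Fintype V] [DecidableEq V]
    (G : SimpleGraph V) [DecidableRel G.Adj]
    (hconn : G.Connected) (hmin : ∀ x : V, 2 ≤ G.degree x)
    (lam : ℂ) (hlam : ‖lam‖ = 1)
    (hev : ∃ v : G.Dart → ℂ, v ≠ 0 ∧ (nbMatrix G).mulVec v = lam • v) :
    ∃ q : ℕ, 0 < q ∧ lam ^ q = 1 :=
  unitary_eigenvalue_is_root_of_unity_general G hmin lam hlam hev
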